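/- Let m be a positive integer, ε = ±1, and let q : ℝ² → Mat(m,ℂ), z : ℝ² → ℝ, u : ℝ² → Mat(m,ℂ) be smooth (variables (x,x̄) for q and z, variables (x,ζ) for u), satisfying: z_x(x,x̄) I_m = 2 ε q(x,x̄)², q_{x x̄} = z_{x̄} q, z_{x̄}(x,x̄) ≠ 0 for all (x,x̄), and u(x, z(x,x̄)) = 2 q(x,x̄) for all (x,x̄). Then u satisfies the matrix short pulse equation along the image of the change of variables: for every (x,x̄), u_{xζ}(x, z(x,x̄)) = u(x, z(x,x̄)) − (ε/2) (u² u_ζ)_ζ (x, z(x,x̄)). -/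

import Mathlib

/-!
Differentiating `u (x, z) = 2 q` in `x` gives `u_x ∘ z + z_x • u_ζ ∘ z = 2 q_x`, and
`z_x I = 2 ε q² = (ε / 2) (u ∘ z)²` turns the chain-rule term into `(ε / 2) (u² u_ζ) ∘ z`, so that
`(u_x + (ε / 2) u² u_ζ) ∘ z = 2 q_x`. Differentiating this in `x̄` gives
`z_x̄ • (u_xζ + (ε / 2) (u² u_ζ)_ζ) ∘ z = 2 q_{x x̄} = z_x̄ • u ∘ z`, and `z_x̄ ≠ 0` cancels.
-/

open Matrix

noncomputable section

/-- Entrywise partial derivative with respect to the first variable. -/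
def pd1 {α β : Type*} (M : ℝ → ℝ → Matrix α β ℂ) : ℝ → ℝ → Matrix α β ℂ :=
  fun x t => Matrix.of fun i j => deriv (fun x' => M x' t i j) x

/-- Entrywise partial derivative with respect to the second variable. -/
def pd2 {α β : Type*} (M : ℝ → ℝ → Matrix α β ℂ) : ℝ → ℝ → Matrix α β ℂ :=
  fun x t => Matrix.of fun i j => deriv (fun t' => M x t' i j) t

/-- Entrywise smoothness of a matrix-valued function on ℝ². -/
def MSmooth {α β : Type*} (M : ℝ → ℝ → Matrix α β ℂ) : Prop :=
  ∀ i j, ContDiff ℝ (⊤ : ℕ∞) fun v : ℝ × ℝ => M v.1 v.2 i j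

section PartialDerivatives

variable {E : Type*} [NormedAddCommGroup E] [NormedSpace ℝ E] {f : ℝ → ℝ → E}

theorem deriv_slice_fst_eq_fderiv {x t : ℝ}
    (hf : DifferentiableAt ℝ (fun v : ℝ × ℝ => f v.1 v.2) (x, t)) :
    deriv (fun x' => f x' t) x = fderiv ℝ (fun v : ℝ × ℝ => f v.1 v.2) (x, t) (1, 0) := by
  have h := hf.hasFDerivAt.comp_hasDerivAt x ((hasDerivAt_id' x).prodMk (hasDerivAt_const x t))
  exact h.deriv

theorem deriv_slice_snd_eq_fderiv {x t : ℝ}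
    (hf : DifferentiableAt ℝ (fun v : ℝ × ℝ => f v.1 v.2) (x, t)) :
    deriv (fun t' => f x t') t = fderiv ℝ (fun v : ℝ × ℝ => f v.1 v.2) (x, t) (0, 1) := by
  have h := hf.hasFDerivAt.comp_hasDerivAt t ((hasDerivAt_const t x).prodMk (hasDerivAt_id' t))
  exact h.deriv

theorem deriv_comp_graph {ζ : ℝ → ℝ} {x : ℝ}
    (hf : DifferentiableAt ℝ (fun v : ℝ × ℝ => f v.1 v.2) (x, ζ x))
    (hζ : DifferentiableAt ℝ ζ x) :
    deriv (fun x' => f x' (ζ x')) x =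
      deriv (fun x' => f x' (ζ x)) x + deriv ζ x • deriv (fun t => f x t) (ζ x) := by
  have hgraph := hf.hasFDerivAt.comp_hasDerivAt x ((hasDerivAt_id' x).prodMk hζ.hasDerivAt)
  have hsplit : ((1 : ℝ), deriv ζ x) = ((1 : ℝ), (0 : ℝ)) + deriv ζ x • ((0 : ℝ), (1 : ℝ)) := by
    simp
  rw [deriv_slice_fst_eq_fderiv hf, deriv_slice_snd_eq_fderiv hf, ← map_smul, ← map_add,
    ← hsplit]
  exact hgraph.deriv

theorem ContDiff.deriv_slice_fst {m n : WithTop ℕ∞}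
    (hf : ContDiff ℝ n fun v : ℝ × ℝ => f v.1 v.2) (hmn : m + 1 ≤ n) :
    ContDiff ℝ m fun v : ℝ × ℝ => deriv (fun x' => f x' v.2) v.1 := by
  have hdiff := hf.differentiable (by rintro rfl; simp at hmn)
  simp_rw [deriv_slice_fst_eq_fderiv (hdiff _)]
  exact (ContinuousLinearMap.apply ℝ E ((1 : ℝ), (0 : ℝ))).contDiff.comp (hf.fderiv_right hmn)

theorem ContDiff.deriv_slice_snd {m n : WithTop ℕ∞}
    (hf : ContDiff ℝ n fun v : ℝ × ℝ => f v.1 v.2) (hmn : m + 1 ≤ n) :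
    ContDiff ℝ m fun v : ℝ × ℝ => deriv (fun t => f v.1 t) v.2 := by
  have hdiff := hf.differentiable (by rintro rfl; simp at hmn)
  simp_rw [deriv_slice_snd_eq_fderiv (hdiff _)]
  exact (ContinuousLinearMap.apply ℝ E ((0 : ℝ), (1 : ℝ))).contDiff.comp (hf.fderiv_right hmn)

theorem ContDiff.differentiableAt_slice_fst {n : WithTop ℕ∞}
    (hf : ContDiff ℝ n fun v : ℝ × ℝ => f v.1 v.2) (hn : n ≠ 0) (x t : ℝ) :
    DifferentiableAt ℝ (fun x' => f x' t) x := by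
  have hslice := (hf.differentiable hn (x, t)).comp x
    ((differentiableAt_fun_id (𝕜 := ℝ) (x := x)).prodMk (differentiableAt_const t))
  exact hslice

theorem ContDiff.differentiableAt_slice_snd {n : WithTop ℕ∞}
    (hf : ContDiff ℝ n fun v : ℝ × ℝ => f v.1 v.2) (hn : n ≠ 0) (x t : ℝ) :
    DifferentiableAt ℝ (fun t' => f x t') t := by
  have hslice := (hf.differentiable hn (x, t)).comp t
    ((differentiableAt_const x).prodMk differentiableAt_fun_id)
  exact hslice

end PartialDerivatives

section MatrixPartials

variable {α β γ : Type*}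

theorem MSmooth.differentiableAt {M : ℝ → ℝ → Matrix α β ℂ} (hM : MSmooth M) (i : α) (j : β)
    (v : ℝ × ℝ) : DifferentiableAt ℝ (fun v : ℝ × ℝ => M v.1 v.2 i j) v :=
  (hM i j).differentiable (by simp) v

theorem MSmooth.differentiableAt_slice_snd {M : ℝ → ℝ → Matrix α β ℂ} (hM : MSmooth M)
    (i : α) (j : β) (x t : ℝ) : DifferentiableAt ℝ (fun t' => M x t' i j) t :=
  ContDiff.differentiableAt_slice_snd (f := fun x t => M x t i j) (hM i j) (by simp) x t

theorem MSmooth.differentiableAt_comp {M : ℝ → ℝ → Matrix α β ℂ} (hM : MSmooth M)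
    {z : ℝ → ℝ → ℝ} {x s : ℝ} (hz : DifferentiableAt ℝ (fun s => z x s) s) (i : α) (j : β) :
    DifferentiableAt ℝ (fun s => M x (z x s) i j) s :=
  DifferentiableAt.comp (g := fun t => M x t i j) s (hM.differentiableAt_slice_snd i j x _) hz

theorem MSmooth.pd1 {M : ℝ → ℝ → Matrix α β ℂ} (hM : MSmooth M) : MSmooth (pd1 M) :=
  fun i j => ContDiff.deriv_slice_fst (f := fun x t => M x t i j) (hM i j)
    (by exact_mod_cast le_top)

theorem MSmooth.pd2 {M : ℝ → ℝ → Matrix α β ℂ} (hM : MSmooth M) : MSmooth (pd2 M) :=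
  fun i j => ContDiff.deriv_slice_snd (f := fun x t => M x t i j) (hM i j)
    (by exact_mod_cast le_top)

theorem MSmooth.mul [Fintype β] {A : ℝ → ℝ → Matrix α β ℂ} {B : ℝ → ℝ → Matrix β γ ℂ}
    (hA : MSmooth A) (hB : MSmooth B) : MSmooth fun x t => A x t * B x t := by
  intro i j
  simp only [Matrix.mul_apply]
  exact ContDiff.sum fun k _ => (hA i k).mul (hB k j)

theorem pd1_const_smul (c : ℂ) (M : ℝ → ℝ → Matrix α β ℂ) (x t : ℝ) :
    pd1 (fun x t => c • M x t) x t = c • pd1 M x t := by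
  ext i j
  exact deriv_const_mul_field c

theorem pd2_const_smul (c : ℂ) (M : ℝ → ℝ → Matrix α β ℂ) (x t : ℝ) :
    pd2 (fun x t => c • M x t) x t = c • pd2 M x t := by
  ext i j
  exact deriv_const_mul_field c

theorem pd2_add {A B : ℝ → ℝ → Matrix α β ℂ} {x t : ℝ}
    (hA : ∀ i j, DifferentiableAt ℝ (fun t' => A x t' i j) t)
    (hB : ∀ i j, DifferentiableAt ℝ (fun t' => B x t' i j) t) :
    pd2 (fun x t => A x t + B x t) x t = pd2 A x t + pd2 B x t := by
  ext i j
  exact deriv_add (hA i j) (hB i j)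

theorem pd1_comp {M : ℝ → ℝ → Matrix α β ℂ} {z : ℝ → ℝ → ℝ} {x s : ℝ}
    (hM : ∀ i j, DifferentiableAt ℝ (fun v : ℝ × ℝ => M v.1 v.2 i j) (x, z x s))
    (hz : DifferentiableAt ℝ (fun x' => z x' s) x) :
    pd1 (fun x s => M x (z x s)) x s
      = pd1 M x (z x s) + ((deriv (fun x' => z x' s) x : ℝ) : ℂ) • pd2 M x (z x s) := by
  ext i j
  exact deriv_comp_graph (f := fun x t => M x t i j) (hM i j) hz

theorem pd2_comp {M : ℝ → ℝ → Matrix α β ℂ} {z : ℝ → ℝ → ℝ} {x s : ℝ}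
    (hM : ∀ i j, DifferentiableAt ℝ (fun t => M x t i j) (z x s))
    (hz : DifferentiableAt ℝ (fun s => z x s) s) :
    pd2 (fun x s => M x (z x s)) x s
      = ((deriv (fun s => z x s) s : ℝ) : ℂ) • pd2 M x (z x s) := by
  ext i j
  exact deriv.scomp s (hM i j) hz

end MatrixPartials

theorem smul_mul_mul_eq_of_smul_one_eq {R : Type*} [Ring R] [Algebra ℂ R] {U Q B : R} {ε c : ℂ}
    (hU : U = (2 : ℂ) • Q) (hQ : c • 1 = (2 * ε) • (Q * Q)) :
    (ε / 2) • (U * U * B) = c • B := by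
  calc (ε / 2) • (U * U * B) = ((2 * ε) • (Q * Q)) * B := by
        rw [hU]
        simp only [smul_mul_assoc, mul_smul_comm, smul_smul]
        ring_nf
    _ = c • B := by rw [← hQ, smul_mul_assoc, one_mul]

theorem pd1_add_smul_cube_eq {n : Type*} [Fintype n] [DecidableEq n] {ε : ℂ}
    {q u : ℝ → ℝ → Matrix n n ℂ} {z : ℝ → ℝ → ℝ} (hu : MSmooth u)
    (hz : ∀ x s, DifferentiableAt ℝ (fun x' => z x' s) x)
    (hzx : ∀ x s, ((deriv (fun x' => z x' s) x : ℝ) : ℂ) • (1 : Matrix n n ℂ)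
      = (2 * ε) • (q x s * q x s))
    (hcomp : ∀ x s, u x (z x s) = (2 : ℂ) • q x s) (x s : ℝ) :
    pd1 u x (z x s) + (ε / 2) • (u x (z x s) * u x (z x s) * pd2 u x (z x s))
      = (2 : ℂ) • pd1 q x s := by
  have hchain := pd1_comp (fun i j => hu.differentiableAt i j (x, z x s)) (hz x s)
  rw [show (fun x s => u x (z x s)) = fun x s => (2 : ℂ) • q x s from funext₂ hcomp,
    pd1_const_smul] at hchain
  rw [smul_mul_mul_eq_of_smul_one_eq (hcomp x s) (hzx x s), hchain]

theorem statement12_general (m : ℕ)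
    (ε : ℂ)
    (q : ℝ → ℝ → Matrix (Fin m) (Fin m) ℂ)
    (z : ℝ → ℝ → ℝ)
    (u : ℝ → ℝ → Matrix (Fin m) (Fin m) ℂ)
    (hu : MSmooth u)
    (hz : ContDiff ℝ (⊤ : ℕ∞) fun v : ℝ × ℝ => z v.1 v.2)
    (hzx : ∀ x xb : ℝ,
      ((deriv (fun x' => z x' xb) x : ℝ) : ℂ) • (1 : Matrix (Fin m) (Fin m) ℂ)
        = (2 * ε) • (q x xb * q x xb))
    (hqxxb : ∀ x xb : ℝ,
      pd2 (pd1 q) x xb = ((deriv (fun s => z x s) xb : ℝ) : ℂ) • q x xb)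
    (hzxb : ∀ x xb : ℝ, deriv (fun s => z x s) xb ≠ 0)
    (hcomp : ∀ x xb : ℝ, u x (z x xb) = (2 : ℂ) • q x xb) :
    ∀ x xb : ℝ,
      pd2 (pd1 u) x (z x xb) =
        u x (z x xb)
          - (ε / 2) • pd2 (fun x ζ => u x ζ * u x ζ * pd2 u x ζ) x (z x xb) := by
  intro x xb
  have hzs : DifferentiableAt ℝ (fun s => z x s) xb := hz.differentiableAt_slice_snd (by simp) x xb
  have hcube : MSmooth fun x ζ => u x ζ * u x ζ * pd2 u x ζ := (hu.mul hu).mul hu.pd2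
  have hlhs : pd2 (fun x s => pd1 u x (z x s)
        + (ε / 2) • (u x (z x s) * u x (z x s) * pd2 u x (z x s))) x xb
      = ((deriv (fun s => z x s) xb : ℝ) : ℂ) • (pd2 (pd1 u) x (z x xb)
        + (ε / 2) • pd2 (fun x ζ => u x ζ * u x ζ * pd2 u x ζ) x (z x xb)) := by
    rw [pd2_add (hu.pd1.differentiableAt_comp hzs)
        (fun i j => (hcube.differentiableAt_comp hzs i j).const_mul (ε / 2)),
      pd2_const_smul, pd2_comp (hu.pd1.differentiableAt_slice_snd · · x _) hzs,
      pd2_comp (M := fun x ζ => u x ζ * u x ζ * pd2 u x ζ)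
        (hcube.differentiableAt_slice_snd · · x _) hzs, smul_add, smul_comm (ε / 2)]
  have hrhs : pd2 (fun x s => (2 : ℂ) • pd1 q x s) x xb
      = ((deriv (fun s => z x s) xb : ℝ) : ℂ) • u x (z x xb) := by
    rw [pd2_const_smul, hqxxb, hcomp, smul_comm]
  have hkey := congrFun (congrFun (congrArg pd2 (funext₂ (pd1_add_smul_cube_eq hu
    (hz.differentiableAt_slice_fst (by simp)) hzx hcomp))) x) xb
  rw [hlhs, hrhs] at hkey
  exact eq_sub_of_add_eq (smul_right_injective _ (by exact_mod_cast hzxb x xb) hkey)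

theorem statement12 (m : ℕ) (hm : 0 < m)
    (ε : ℂ) (hε : ε = 1 ∨ ε = -1)
    (q : ℝ → ℝ → Matrix (Fin m) (Fin m) ℂ)
    (z : ℝ → ℝ → ℝ)
    (u : ℝ → ℝ → Matrix (Fin m) (Fin m) ℂ)
    (hq : MSmooth q) (hu : MSmooth u)
    (hz : ContDiff ℝ (⊤ : ℕ∞) fun v : ℝ × ℝ => z v.1 v.2)
    (hzx : ∀ x xb : ℝ,
      ((deriv (fun x' => z x' xb) x : ℝ) : ℂ) • (1 : Matrix (Fin m) (Fin m) ℂ)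
        = (2 * ε) • (q x xb * q x xb))
    (hqxxb : ∀ x xb : ℝ,
      pd2 (pd1 q) x xb = ((deriv (fun s => z x s) xb : ℝ) : ℂ) • q x xb)
    (hzxb : ∀ x xb : ℝ, deriv (fun s => z x s) xb ≠ 0)
    (hcomp : ∀ x xb : ℝ, u x (z x xb) = (2 : ℂ) • q x xb) :
    ∀ x xb : ℝ,
      pd2 (pd1 u) x (z x xb) =
        u x (z x xb)
          - (ε / 2) • pd2 (fun x ζ => u x ζ * u x ζ * pd2 u x ζ) x (z x xb) :=
  statement12_general m ε q z u hu hz hzx hqxxb hzxb hcomp
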